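/- arXiv:1910.09483 — 2 statements merged into one kernel-verified Lean document; each statement's English description precedes it below -/
import Mathlib

section
/- For any two simple functions (graphons taking finitely many values on a common measurable partition of [0,1]^2) U, W : [0,1]^2 → [0,1], ∫_0^1 ‖1(U ≥ t) − 1(W ≥ t)‖_□ dt ≤ ‖U − W‖_1. -/
/-! For each threshold `t` the cut norm of `1(U ≥ t) − 1(W ≥ t)` is at most its `L¹` norm on the
unit square. Integrating over `t` and exchanging the order of integration (Fubini) reduces the
claim to the pointwise bound `∫₀¹ |1(t ≤ u) − 1(t ≤ w)| dt ≤ |u − w|`, the measure of the interval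
between `u` and `w`. -/

open MeasureTheory Set

/-- The cut norm of a kernel `W : [0,1]² → ℝ`. -/
noncomputable def cutNorm (W : ℝ → ℝ → ℝ) : ℝ :=
  ⨆ p : {A : Set ℝ // MeasurableSet A ∧ A ⊆ Set.Icc 0 1} ×
        {B : Set ℝ // MeasurableSet B ∧ B ⊆ Set.Icc 0 1},
    |∫ x in p.1.1, ∫ y in p.2.1, W x y|

theorem aemeasurable_restrict_iUnion_of_forall_eq {α β ι : Type*} [MeasurableSpace α]
    [MeasurableSpace β] [Countable ι] {μ : Measure α} {t : ι → Set α}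
    (ht : ∀ i, MeasurableSet (t i)) {f : α → β} (hf : ∀ i, ∀ x ∈ t i, ∀ y ∈ t i, f x = f y) :
    AEMeasurable f (μ.restrict (⋃ i, t i)) := by
  refine aemeasurable_iUnion_iff.2 fun i => ?_
  rcases (t i).eq_empty_or_nonempty with h | ⟨x, hx⟩
  · simp [h]
  · exact aemeasurable_const.congr <|
      (ae_restrict_iff' (ht i)).2 (ae_of_all _ fun y hy => hf i x hx y hy)

theorem integrable_ite_le_sub_ite_le {α : Type*} [MeasurableSpace α] {μ : Measure α}
    [IsFiniteMeasure μ] {a b c : α → ℝ} (ha : AEMeasurable a μ) (hb : AEMeasurable b μ)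
    (hc : AEMeasurable c μ) :
    Integrable (fun x => (if a x ≤ b x then (1:ℝ) else 0) - (if a x ≤ c x then 1 else 0)) μ := by
  have hle : Measurable fun p : ℝ × ℝ => if p.1 ≤ p.2 then (1:ℝ) else 0 :=
    Measurable.ite (measurableSet_le measurable_fst measurable_snd) measurable_const
      measurable_const
  refine .of_bound ((hle.comp_aemeasurable (ha.prodMk hb)).sub
    (hle.comp_aemeasurable (ha.prodMk hc))).aestronglyMeasurable 1 (ae_of_all _ fun x => ?_)
  simp only [Real.norm_eq_abs]
  split_ifs <;> norm_num

theorem setIntegral_abs_ite_le_sub_ite_le_le_abs_sub (s : Set ℝ) (u w : ℝ) :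
    ∫ t in s, |(if t ≤ u then (1:ℝ) else 0) - (if t ≤ w then 1 else 0)| ≤ |u - w| := by
  have h : (fun t => |(if t ≤ u then (1:ℝ) else 0) - (if t ≤ w then 1 else 0)|)
      = (uIoc w u).indicator 1 := by
    ext t
    simp only [indicator, uIoc, mem_Ioc, Pi.one_apply, inf_lt_iff, le_sup_iff]
    split_ifs <;> grind
  calc _ = ∫ t in s, (uIoc w u).indicator 1 t := by rw [h]
    _ ≤ ∫ t, (uIoc w u).indicator 1 t :=
      setIntegral_le_integral ((integrable_indicator_iff measurableSet_uIoc).2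
        (integrableOn_const (by simp [Real.volume_uIoc])))
        (ae_of_all _ fun t => indicator_nonneg (fun _ _ => zero_le_one) t)
    _ = |u - w| := by
      rw [integral_indicator_one measurableSet_uIoc, measureReal_def, Real.volume_uIoc,
        ENNReal.toReal_ofReal (abs_nonneg _)]

theorem cutNorm_le_setIntegral_abs {K : ℝ → ℝ → ℝ}
    (hK : IntegrableOn (fun p : ℝ × ℝ => K p.1 p.2) (Icc 0 1 ×ˢ Icc 0 1)) :
    cutNorm K ≤ ∫ p in Icc 0 1 ×ˢ Icc 0 1, |K p.1 p.2| := by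
  refine Real.iSup_le (fun ⟨⟨A, hA, hAI⟩, ⟨B, hB, hBI⟩⟩ => ?_)
    (setIntegral_nonneg (measurableSet_Icc.prod measurableSet_Icc) fun _ _ => abs_nonneg _)
  have hAB : A ×ˢ B ⊆ Icc 0 1 ×ˢ Icc 0 1 := prod_mono hAI hBI
  calc |∫ x in A, ∫ y in B, K x y| = |∫ p in A ×ˢ B, K p.1 p.2| := by
        rw [Measure.volume_eq_prod, setIntegral_prod _ (hK.mono_set hAB)]
    _ ≤ ∫ p in A ×ˢ B, |K p.1 p.2| := abs_integral_le_integral_abs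
    _ ≤ ∫ p in Icc 0 1 ×ˢ Icc 0 1, |K p.1 p.2| :=
      setIntegral_mono_set hK.abs (ae_of_all _ fun _ => abs_nonneg _) hAB.eventuallyLE

theorem integral_threshold_cutNorm_le_of_aemeasurable {U W : ℝ → ℝ → ℝ}
    (hU : AEMeasurable (fun p : ℝ × ℝ => U p.1 p.2) (volume.restrict (Icc 0 1 ×ˢ Icc 0 1)))
    (hW : AEMeasurable (fun p : ℝ × ℝ => W p.1 p.2) (volume.restrict (Icc 0 1 ×ˢ Icc 0 1)))
    (hUW : IntegrableOn (fun p : ℝ × ℝ => U p.1 p.2 - W p.1 p.2) (Icc 0 1 ×ˢ Icc 0 1)) :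
    (∫ t in Icc (0:ℝ) 1,
        cutNorm (fun x y =>
          (if t ≤ U x y then (1:ℝ) else 0) - (if t ≤ W x y then (1:ℝ) else 0))) ≤
      ∫ x in Icc (0:ℝ) 1, ∫ y in Icc (0:ℝ) 1, |U x y - W x y| := by
  set S : Set (ℝ × ℝ) := Icc 0 1 ×ˢ Icc 0 1
  have : IsFiniteMeasure (volume.restrict S) :=
    isFiniteMeasure_restrict.2 (isCompact_Icc.prod isCompact_Icc).measure_lt_top.ne
  have hprod : Integrable (fun q : ℝ × (ℝ × ℝ) =>
      |(if q.1 ≤ U q.2.1 q.2.2 then (1:ℝ) else 0) - (if q.1 ≤ W q.2.1 q.2.2 then 1 else 0)|)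
      ((volume.restrict (Icc 0 1)).prod (volume.restrict S)) :=
    (integrable_ite_le_sub_ite_le measurable_fst.aemeasurable hU.comp_snd hW.comp_snd).abs
  have hcut : ∀ t, cutNorm (fun x y =>
      (if t ≤ U x y then (1:ℝ) else 0) - (if t ≤ W x y then (1:ℝ) else 0)) ≤
      ∫ p in S, |(if t ≤ U p.1 p.2 then (1:ℝ) else 0) - (if t ≤ W p.1 p.2 then 1 else 0)| :=
    fun t => cutNorm_le_setIntegral_abs (integrable_ite_le_sub_ite_le aemeasurable_const hU hW)
  calc _ ≤ ∫ t in Icc 0 1, ∫ p in S,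
          |(if t ≤ U p.1 p.2 then (1:ℝ) else 0) - (if t ≤ W p.1 p.2 then 1 else 0)| :=
        integral_mono_of_nonneg (ae_of_all _ fun _ => Real.iSup_nonneg fun _ => abs_nonneg _)
          hprod.integral_prod_left (ae_of_all _ hcut)
    _ = ∫ p in S, ∫ t in Icc 0 1,
          |(if t ≤ U p.1 p.2 then (1:ℝ) else 0) - (if t ≤ W p.1 p.2 then 1 else 0)| :=
        integral_integral_swap hprod
    _ ≤ ∫ p in S, |U p.1 p.2 - W p.1 p.2| :=
        integral_mono hprod.integral_prod_right hUW.abs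
          fun p => setIntegral_abs_ite_le_sub_ite_le_le_abs_sub _ _ _
    _ = ∫ x in Icc 0 1, ∫ y in Icc 0 1, |U x y - W x y| := by
        rw [Measure.volume_eq_prod, setIntegral_prod _ hUW.abs]

theorem integral_threshold_cutNorm_le_l1_general (n : ℕ) (R : Fin n → Set (ℝ × ℝ))
    (hRmeas : ∀ i, MeasurableSet (R i))
    (hRcover : (⋃ i, R i) = Set.Icc (0:ℝ) 1 ×ˢ Set.Icc (0:ℝ) 1)
    (U W : ℝ → ℝ → ℝ)
    (hU01 : ∀ x y, U x y ∈ Set.Icc (0:ℝ) 1) (hW01 : ∀ x y, W x y ∈ Set.Icc (0:ℝ) 1)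
    (hUconst : ∀ i, ∀ p ∈ R i, ∀ q ∈ R i, U p.1 p.2 = U q.1 q.2)
    (hWconst : ∀ i, ∀ p ∈ R i, ∀ q ∈ R i, W p.1 p.2 = W q.1 q.2) :
    (∫ t in Set.Icc (0:ℝ) 1,
        cutNorm (fun x y =>
          (if t ≤ U x y then (1:ℝ) else 0) - (if t ≤ W x y then (1:ℝ) else 0))) ≤
      ∫ x in Set.Icc (0:ℝ) 1, ∫ y in Set.Icc (0:ℝ) 1, |U x y - W x y| := by
  have hU := aemeasurable_restrict_iUnion_of_forall_eq (μ := volume) hRmeas hUconst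
  have hW := aemeasurable_restrict_iUnion_of_forall_eq (μ := volume) hRmeas hWconst
  rw [hRcover] at hU hW
  have hUW : IntegrableOn (fun p : ℝ × ℝ => U p.1 p.2 - W p.1 p.2) (Icc 0 1 ×ˢ Icc 0 1) :=
    .of_bound (isCompact_Icc.prod isCompact_Icc).measure_lt_top (hU.sub hW).aestronglyMeasurable 1
      (ae_of_all _ fun p => abs_sub_le_of_nonneg_of_le (hU01 p.1 p.2).1 (hU01 p.1 p.2).2
        (hW01 p.1 p.2).1 (hW01 p.1 p.2).2)
  exact integral_threshold_cutNorm_le_of_aemeasurable hU hW hUW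

/-- For any two graphons `U, W : [0,1]² → [0,1]` that are simple functions on a
common finite measurable partition `[0,1]² = R₁ ⊔ ⋯ ⊔ Rₙ`,
`∫₀¹ ‖1(U ≥ t) − 1(W ≥ t)‖_□ dt ≤ ‖U − W‖₁`. -/
theorem integral_threshold_cutNorm_le_l1 (n : ℕ) (R : Fin n → Set (ℝ × ℝ))
    (hRmeas : ∀ i, MeasurableSet (R i))
    (hRdisj : ∀ i j, i ≠ j → Disjoint (R i) (R j))
    (hRcover : (⋃ i, R i) = Set.Icc (0:ℝ) 1 ×ˢ Set.Icc (0:ℝ) 1)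
    (U W : ℝ → ℝ → ℝ)
    (hU01 : ∀ x y, U x y ∈ Set.Icc (0:ℝ) 1) (hW01 : ∀ x y, W x y ∈ Set.Icc (0:ℝ) 1)
    (hUconst : ∀ i, ∀ p ∈ R i, ∀ q ∈ R i, U p.1 p.2 = U q.1 q.2)
    (hWconst : ∀ i, ∀ p ∈ R i, ∀ q ∈ R i, W p.1 p.2 = W q.1 q.2) :
    (∫ t in Set.Icc (0:ℝ) 1,
        cutNorm (fun x y =>
          (if t ≤ U x y then (1:ℝ) else 0) - (if t ≤ W x y then (1:ℝ) else 0))) ≤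
      ∫ x in Set.Icc (0:ℝ) 1, ∫ y in Set.Icc (0:ℝ) 1, |U x y - W x y| :=
  integral_threshold_cutNorm_le_l1_general n R hRmeas hRcover U W hU01 hW01 hUconst hWconst
end

section
/- Let f_1 = 1 on [0,1] and let f_2 : [0,1] → {−1, 1} be measurable with ∫_0^1 f_2 = 0. For ε ∈ (0,1), define kernels U = f_1⊗f_1 + f_2⊗f_2 and U_ε = f_1⊗f_1 + (1−ε) f_2⊗f_2, where (f⊗g)(x,y) = f(x)g(y). Then the transitive closures satisfy Ū = U and Ū_ε = f_1⊗f_1, and consequently ε(Ū − Ū_ε) = U − U_ε; in particular ‖Ū − Ū_ε‖_1 = (1/ε)‖U − U_ε‖_1, showing the transitive closure map is not Lipschitz (unstable) in any norm. -/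
open MeasureTheory Set

/-- instability of the transitive closure.  Let `f₁ = 1` on `[0,1]` and
`f₂ : [0,1] → {−1,1}` measurable with `∫₀¹ f₂ = 0`.  For `ε ∈ (0,1)` set
`U = f₁⊗f₁ + f₂⊗f₂` and `U_ε = f₁⊗f₁ + (1−ε) f₂⊗f₂`.  The transitive closures (computed from
the spectral decompositions, `W̄ = (Σ_{j≤r} f_j⊗f_j)/(Σ_{j≤r} (∫f_j)²)` with `r` the top
multiplicity, `r = 2` for `U` and `r = 1` for `U_ε`) satisfy `Ū = U`, `Ū_ε = f₁⊗f₁`, hence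
`ε (Ū − Ū_ε) = U − U_ε` pointwise and `‖Ū − Ū_ε‖₁ = (1/ε) ‖U − U_ε‖₁`. -/
theorem transitiveClosure_instability (f2 : ℝ → ℝ) (hmeas : Measurable f2)
    (hval : ∀ x ∈ Set.Icc (0:ℝ) 1, f2 x = 1 ∨ f2 x = -1)
    (hint : (∫ x in Set.Icc (0:ℝ) 1, f2 x) = 0)
    (ε : ℝ) (hε : ε ∈ Set.Ioo (0:ℝ) 1) :
    -- the two kernels
    let U : ℝ → ℝ → ℝ := fun x y => 1 * 1 + f2 x * f2 y
    let Ue : ℝ → ℝ → ℝ := fun x y => 1 * 1 + (1 - ε) * (f2 x * f2 y)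
    -- their transitive closures, from the spectral decompositions
    let Ubar : ℝ → ℝ → ℝ := fun x y =>
      (1 * 1 + f2 x * f2 y) /
        ((∫ s in Set.Icc (0:ℝ) 1, (1:ℝ)) ^ 2 + (∫ s in Set.Icc (0:ℝ) 1, f2 s) ^ 2)
    let Uebar : ℝ → ℝ → ℝ := fun x y => (1 * 1) / ((∫ s in Set.Icc (0:ℝ) 1, (1:ℝ)) ^ 2)
    -- the claims
    (∀ x y, Ubar x y = U x y) ∧
    (∀ x y, Uebar x y = 1 * 1) ∧
    (∀ x y, ε * (Ubar x y - Uebar x y) = U x y - Ue x y) ∧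
    ((∫ x in Set.Icc (0:ℝ) 1, ∫ y in Set.Icc (0:ℝ) 1, |Ubar x y - Uebar x y|) =
      (1 / ε) * ∫ x in Set.Icc (0:ℝ) 1, ∫ y in Set.Icc (0:ℝ) 1, |U x y - Ue x y|) := by
  intro U Ue Ubar Uebar
  have h1 : (∫ s in Set.Icc (0:ℝ) 1, (1:ℝ)) = 1 := by
    simp [Real.volume_Icc]
  have hεpos : (0:ℝ) < ε := hε.1
  have hεne : ε ≠ 0 := ne_of_gt hεpos
  have hUbar : ∀ x y, Ubar x y = U x y := by
    intro x y
    simp only [Ubar, U, h1, hint]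
    norm_num
  have hUebar : ∀ x y, Uebar x y = 1 * 1 := by
    intro x y
    simp only [Uebar, h1]
    norm_num
  have hdiff : ∀ x y, Ubar x y - Uebar x y = f2 x * f2 y := by
    intro x y
    rw [hUbar x y, hUebar x y]
    simp only [U]; ring
  have hdiff2 : ∀ x y, U x y - Ue x y = ε * (f2 x * f2 y) := by
    intro x y
    simp only [U, Ue]; ring
  refine ⟨hUbar, hUebar, ?_, ?_⟩
  · intro x y
    rw [hdiff x y, hdiff2 x y]
  · have key : (∫ x in Set.Icc (0:ℝ) 1, ∫ y in Set.Icc (0:ℝ) 1, |U x y - Ue x y|)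
        = ε * ∫ x in Set.Icc (0:ℝ) 1, ∫ y in Set.Icc (0:ℝ) 1, |Ubar x y - Uebar x y| := by
      rw [← MeasureTheory.integral_const_mul]
      refine integral_congr_ae (Filter.Eventually.of_forall fun x => ?_)
      dsimp only
      rw [← MeasureTheory.integral_const_mul]
      refine integral_congr_ae (Filter.Eventually.of_forall fun y => ?_)
      dsimp only
      rw [hdiff x y, hdiff2 x y, abs_mul, abs_of_pos hεpos]
    rw [key]
    field_simp
end
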